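/- arXiv:1303.0361 — 6 statements merged into one kernel-verified Lean document; each statement's English description precedes it below -/
import Mathlib

section
/- Let 0 < p < 1, q = 1 - p, r₀ ≥ 0, p₀ > 0 with p₀ ≠ p and r₀² ≥ 4q(p - p₀). Define x₂ = (r₀(2p - p₀) - p₀√(r₀² - 4q(p - p₀)))/(2(p - p₀)). If 0 < p₀ < p and p₀ > 2p - √(p/q)·r₀, then (x₂ - r₀)² < q·p₀²/p. -/
set_option maxHeartbeats 1000000 in
theorem stmt_3 (p q p₀ r₀ : ℝ) (hp : 0 < p) (hp1 : p < 1) (hq : q = 1 - p)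
    (hr₀ : 0 ≤ r₀) (hp₀ : 0 < p₀) (hne : p₀ ≠ p)
    (hdisc : r₀ ^ 2 ≥ 4 * q * (p - p₀))
    (x₂ : ℝ)
    (hx₂ : x₂ = (r₀ * (2 * p - p₀) - p₀ * Real.sqrt (r₀ ^ 2 - 4 * q * (p - p₀))) / (2 * (p - p₀)))
    (hlt : p₀ < p) (hcond : p₀ > 2 * p - Real.sqrt (p / q) * r₀) :
    (x₂ - r₀) ^ 2 < q * p₀ ^ 2 / p := by
  have hqpos : 0 < q := by rw [hq]; linarith
  have hd : 0 < p - p₀ := by linarith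
  set D := Real.sqrt (r₀ ^ 2 - 4 * q * (p - p₀)) with hD
  have hD0 : 0 ≤ D := Real.sqrt_nonneg _
  have hD2 : D ^ 2 = r₀ ^ 2 - 4 * q * (p - p₀) := Real.sq_sqrt (by linarith)
  have hxr : x₂ - r₀ = p₀ * (r₀ - D) / (2 * (p - p₀)) := by
    rw [hx₂]; field_simp; ring
  clear hx₂
  set s := Real.sqrt (q / p) with hs
  set t := Real.sqrt (p / q) with ht
  have hs0 : 0 < s := Real.sqrt_pos.mpr (by positivity)
  have ht0 : 0 < t := Real.sqrt_pos.mpr (by positivity)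
  have hs2 : s ^ 2 = q / p := Real.sq_sqrt (by positivity)
  have ht2 : t ^ 2 = p / q := Real.sq_sqrt (by positivity)
  have hs2' : s ^ 2 * p = q := by rw [hs2]; field_simp
  have hst : s * t = 1 := by
    have h1 : (s * t) ^ 2 = 1 := by
      rw [mul_pow, hs2, ht2]; field_simp
    nlinarith [mul_pos hs0 ht0]
  have hcond' : 2 * p - p₀ < t * r₀ := by linarith
  have hr : s * (2 * p - p₀) < r₀ := by
    have h := mul_lt_mul_of_pos_left hcond' hs0
    calc s * (2 * p - p₀) < s * (t * r₀) := h
      _ = (s * t) * r₀ := by ring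
      _ = r₀ := by rw [hst, one_mul]
  have h2pp : 0 < 2 * p - p₀ := by linarith
  have hr2 : (s * (2 * p - p₀)) ^ 2 < r₀ ^ 2 := by
    nlinarith [mul_pos hs0 h2pp]
  have hDgt : p₀ * s < D := by
    have h1 : (p₀ * s) ^ 2 < D ^ 2 := by
      rw [hD2, show 4 * q * (p - p₀) = 4 * (s ^ 2 * p) * (p - p₀) by rw [hs2']]
      nlinarith [hr2]
    nlinarith [mul_pos hp₀ hs0]
  have hsum : 2 * p * s < r₀ + D := by linarith [hr, hDgt]
  have hprod : (r₀ - D) * (r₀ + D) = 4 * q * (p - p₀) := by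
    rw [show (r₀ - D) * (r₀ + D) = r₀ ^ 2 - D ^ 2 by ring, hD2]; ring
  have hsumpos : 0 < r₀ + D := by linarith [mul_pos hp hs0]
  have hrd0 : 0 < r₀ - D := by
    nlinarith [mul_pos hqpos hd, hprod, hsumpos]
  have hprod' : (r₀ - D) * (r₀ + D) = 4 * (s ^ 2 * p) * (p - p₀) := by
    rw [hs2']; exact hprod
  have key : r₀ - D < 2 * (p - p₀) * s := by
    nlinarith [hprod', hsumpos,
      mul_lt_mul_of_pos_left hsum (by positivity : (0:ℝ) < 2 * (p - p₀) * s)]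
  have hsq0 : (r₀ - D) ^ 2 < (2 * (p - p₀) * s) ^ 2 := by
    nlinarith [key, hrd0, mul_pos hd hs0]
  have e : (2 * (p - p₀) * s) ^ 2 * p = 4 * (p - p₀) ^ 2 * q := by
    rw [show (2 * (p - p₀) * s) ^ 2 * p = 4 * (p - p₀) ^ 2 * (s ^ 2 * p) by ring, hs2']
  have hsq' : (r₀ - D) ^ 2 * p < 4 * (p - p₀) ^ 2 * q := by
    calc (r₀ - D) ^ 2 * p < (2 * (p - p₀) * s) ^ 2 * p := by
          exact mul_lt_mul_of_pos_right hsq0 hp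
      _ = 4 * (p - p₀) ^ 2 * q := e
  rw [hxr, div_pow, div_lt_div_iff₀ (by positivity) hp]
  have := mul_lt_mul_of_pos_left hsq' (pow_pos hp₀ 2)
  nlinarith [this]
end

section
/- Let 0 < p < 1, q = 1 - p, r₀ ≥ 0, 0 < p₀ < p, and suppose r₀² ≥ 4q(p - p₀). Define x₁ = (r₀(2p - p₀) + p₀√(r₀² - 4q(p - p₀)))/(2(p - p₀)). Then (x₁ - r₀)² ≥ q·p₀²/p; that is, there is never a positive mass at x₁ when p₀ < p. -/
theorem stmt_4 (p q p₀ r₀ : ℝ) (hp : 0 < p) (hp1 : p < 1) (hq : q = 1 - p)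
    (hr₀ : 0 ≤ r₀) (hp₀ : 0 < p₀) (hlt : p₀ < p)
    (hdisc : r₀ ^ 2 ≥ 4 * q * (p - p₀))
    (x₁ : ℝ)
    (hx₁ : x₁ = (r₀ * (2 * p - p₀) + p₀ * Real.sqrt (r₀ ^ 2 - 4 * q * (p - p₀))) / (2 * (p - p₀))) :
    (x₁ - r₀) ^ 2 ≥ q * p₀ ^ 2 / p := by
  have hq0 : 0 < q := by rw [hq]; linarith
  have ha : 0 < p - p₀ := by linarith
  have hD : 0 ≤ r₀ ^ 2 - 4 * q * (p - p₀) := by linarith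
  set s := Real.sqrt (r₀ ^ 2 - 4 * q * (p - p₀)) with hs
  have hs0 : 0 ≤ s := Real.sqrt_nonneg _
  have hs2 : s ^ 2 = r₀ ^ 2 - 4 * q * (p - p₀) := Real.sq_sqrt hD
  have hx : x₁ - r₀ = p₀ * (r₀ + s) / (2 * (p - p₀)) := by
    rw [hx₁]; field_simp; ring
  rw [hx, div_pow, ge_iff_le, div_le_div_iff₀ hp (by positivity)]
  have key : 4 * q * (p - p₀) ^ 2 ≤ p * (r₀ + s) ^ 2 := by
    nlinarith [mul_nonneg (mul_nonneg hp.le hr₀) hs0, mul_pos (mul_pos hq0 ha) hp₀]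
  nlinarith [mul_le_mul_of_nonneg_left key (sq_nonneg p₀)]
end

section
/- Let 0 < p < 1, q = 1 - p, r₀ ≥ 0, 0 < p₀ < p with r₀² ≥ 4q(p - p₀) and p₀ > 2p - √(p/q)·r₀. Define x₂ = (r₀(2p - p₀) - p₀√(r₀² - 4q(p - p₀)))/(2(p - p₀)). Then x₂ > 2√(p·q). -/
theorem stmt_5 (p q p₀ r₀ : ℝ) (hp : 0 < p) (hp1 : p < 1) (hq : q = 1 - p)
    (hr₀ : 0 ≤ r₀) (hp₀ : 0 < p₀) (hlt : p₀ < p)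
    (hdisc : r₀ ^ 2 ≥ 4 * q * (p - p₀))
    (hcond : p₀ > 2 * p - Real.sqrt (p / q) * r₀)
    (x₂ : ℝ)
    (hx₂ : x₂ = (r₀ * (2 * p - p₀) - p₀ * Real.sqrt (r₀ ^ 2 - 4 * q * (p - p₀))) / (2 * (p - p₀))) :
    x₂ > 2 * Real.sqrt (p * q) := by
  have hq0 : 0 < q := by rw [hq]; linarith
  set a := Real.sqrt p with hadef
  set b := Real.sqrt q with hbdef
  have ha : a ^ 2 = p := Real.sq_sqrt hp.le
  have hb : b ^ 2 = q := Real.sq_sqrt hq0.le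
  have ha0 : 0 < a := Real.sqrt_pos.mpr hp
  have hb0 : 0 < b := Real.sqrt_pos.mpr hq0
  have hE : 0 ≤ r₀ ^ 2 - 4 * q * (p - p₀) := by linarith
  set D := Real.sqrt (r₀ ^ 2 - 4 * q * (p - p₀)) with hDdef
  have hD0 : 0 ≤ D := Real.sqrt_nonneg _
  have hD2 : D ^ 2 = r₀ ^ 2 - 4 * q * (p - p₀) := Real.sq_sqrt hE
  have hsq : Real.sqrt (p * q) = a * b := Real.sqrt_mul hp.le q
  have hdiv : Real.sqrt (p / q) = a / b := Real.sqrt_div hp.le q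
  rw [hdiv] at hcond
  rw [hsq]
  clear_value a b D
  have hkey : a * r₀ > b * (2 * p - p₀) := by
    have h : a / b * r₀ * b = a * r₀ := by field_simp
    nlinarith [mul_lt_mul_of_pos_right (show 2 * p - a / b * r₀ < p₀ from hcond) hb0]
  have hden : 0 < 2 * (p - p₀) := by linarith
  have h2p : 0 < 2 * p - p₀ := by linarith
  set K := r₀ * (2 * p - p₀) - 4 * (a * b) * (p - p₀) with hKdef
  clear_value K
  have haK : 0 < a * K := by
    have hexp : a * K = a * r₀ * (2 * p - p₀) - 4 * a ^ 2 * b * (p - p₀) := by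
      rw [hKdef]; ring
    rw [hexp, ha]
    nlinarith [mul_lt_mul_of_pos_right hkey h2p, mul_pos hb0 (mul_pos hp₀ hp₀)]
  have hK : 0 < K := by
    by_contra hc
    push_neg at hc
    nlinarith [mul_nonpos_of_nonneg_of_nonpos ha0.le hc]
  have hid : K ^ 2 - (p₀ * D) ^ 2 = 4 * (p - p₀) * (a * r₀ - b * (2 * p - p₀)) ^ 2 := by
    rw [hKdef]
    linear_combination (-(p₀ ^ 2)) * hD2 + (16 * b ^ 2 * (p - p₀) ^ 2 - 4 * (p - p₀) * r₀ ^ 2) * ha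
      + (16 * p * (p - p₀) ^ 2 - 4 * (p - p₀) * (2 * p - p₀) ^ 2) * hb
  have hKsq : (p₀ * D) ^ 2 < K ^ 2 := by
    have hpos : 0 < 4 * (p - p₀) * (a * r₀ - b * (2 * p - p₀)) ^ 2 :=
      mul_pos (by linarith) (pow_pos (by linarith) 2)
    linarith [hid, hpos]
  have hlt2 : p₀ * D < K :=
    lt_of_pow_lt_pow_left₀ 2 hK.le hKsq
  rw [hx₂, gt_iff_lt, lt_div_iff₀ hden]
  rw [hKdef] at hlt2
  linarith [hlt2]
end

section
/- Let 0 < p < 1, q = 1 - p, and x² = x/(2√(pq)) for x ∈ ℝ. Define Q_j(x) = (q/p)^{j/2}·[ (2(p₀ - p)/p₀)·T_j(x*) + ((2p - p₀)/p₀)·U_j(x*) - (r₀/p₀)·√(p/q)·U_{j-1}(x*) ], where T_j, U_j are Chebyshev polynomials of the first and second kind (with U_{-1} = 0), and p₀ > 0, r₀ ≥ 0. Then Q_0(x) = 1 and the polynomials satisfy the three-term recurrence r₀·Q_0(x) + p₀·Q_1(x) = x·Q_0(x) and q·Q_{j-1}(x) + p·Q_{j+1}(x) = x·Q_j(x) for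 all j ≥ 1. -/
/-
Write `y = x / (2√(pq))` and `r = √(q/p)`. Then `Q_j(x) = r^j F_j(y)`, where `F_j` is a fixed linear
combination of `T_j`, `U_j` and `U_{j-1}`, so `F_{j-1} + F_{j+1} = 2y F_j` for every integer `j` by
the Chebyshev recurrence. Since `q = p r²` and `√(pq) = p r`, the weights `r^j` turn this symmetric
recurrence into `q Q_{j-1} + p Q_{j+1} = x Q_j`. At `j = 0, 1` only `T_0 = U_0 = 1`, `T_1 = y`,
`U_1 = 2y`, `U_{-1} = 0` enter, and the coefficients of `T` and `U` are chosen so that their sum is `1`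
and `p₀ Q_1(x) = 2 p r y - r₀ r √(p/q) = x - r₀`.
-/

open Polynomial

/-- The eigenfunctions of the tridiagonal transition matrix, expressed in terms of
Chebyshev polynomials of the first and second kind. -/
noncomputable def kmQ (p q p₀ r₀ : ℝ) (j : ℤ) (x : ℝ) : ℝ :=
  (q / p) ^ ((j : ℝ) / 2) *
    ((2 * (p₀ - p) / p₀) * (Polynomial.Chebyshev.T ℝ j).eval (x / (2 * Real.sqrt (p * q))) +
     ((2 * p - p₀) / p₀) * (Polynomial.Chebyshev.U ℝ j).eval (x / (2 * Real.sqrt (p * q))) -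
     (r₀ / p₀) * Real.sqrt (p / q) *
       (Polynomial.Chebyshev.U ℝ (j - 1)).eval (x / (2 * Real.sqrt (p * q))))


open Chebyshev

namespace Polynomial.Chebyshev

variable {R : Type*} [CommRing R]

theorem eval_T_sub_one_add_eval_T_add_one (n : ℤ) (y : R) :
    (T R (n - 1)).eval y + (T R (n + 1)).eval y = 2 * y * (T R n).eval y := by
  rw [T_add_one]
  simp only [eval_sub, eval_mul, eval_X, eval_ofNat]
  ring

theorem eval_U_sub_one_add_eval_U_add_one (n : ℤ) (y : R) :
    (U R (n - 1)).eval y + (U R (n + 1)).eval y = 2 * y * (U R n).eval y := by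
  rw [U_add_one]
  simp only [eval_sub, eval_mul, eval_X, eval_ofNat]
  ring

end Polynomial.Chebyshev

noncomputable def chebCombo {R : Type*} [CommRing R] (a b d y : R) (j : ℤ) : R :=
  a * (T R j).eval y + b * (U R j).eval y - d * (U R (j - 1)).eval y

section chebCombo

variable {R : Type*} [CommRing R] (a b d y : R)

theorem chebCombo_zero : chebCombo a b d y 0 = a + b := by
  simp [chebCombo]

theorem chebCombo_one : chebCombo a b d y 1 = (a + 2 * b) * y - d := by
  simp only [chebCombo, T_one, U_one, sub_self, U_zero, eval_X, eval_mul, eval_ofNat, eval_one]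
  ring

theorem chebCombo_sub_one_add_chebCombo_add_one (j : ℤ) :
    chebCombo a b d y (j - 1) + chebCombo a b d y (j + 1) = 2 * y * chebCombo a b d y j := by
  have hT := eval_T_sub_one_add_eval_T_add_one j y
  have hU := eval_U_sub_one_add_eval_U_add_one j y
  have hU' := eval_U_sub_one_add_eval_U_add_one (j - 1) y
  simp only [chebCombo, sub_add_cancel, add_sub_cancel_right] at hU' ⊢
  linear_combination a * hT + b * hU - d * hU'

end chebCombo

theorem zpow_mul_recurrence {K : Type*} [Field K] {F : ℤ → K} {y r : K} (hr : r ≠ 0)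
    (hF : ∀ j, F (j - 1) + F (j + 1) = 2 * y * F j) (j : ℤ) :
    r ^ 2 * (r ^ (j - 1) * F (j - 1)) + r ^ (j + 1) * F (j + 1) = 2 * r * y * (r ^ j * F j) := by
  have hlo : r ^ 2 * r ^ (j - 1) = r * r ^ j := by
    rw [← zpow_natCast, ← zpow_add₀ hr, ← zpow_one_add₀ hr]
    ring_nf
  rw [← mul_assoc, hlo, zpow_add_one₀ hr]
  linear_combination r * r ^ j * hF j

theorem Real.rpow_intCast_div_two {x : ℝ} (hx : 0 ≤ x) (j : ℤ) :
    x ^ ((j : ℝ) / 2) = √x ^ j := by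
  rw [Real.sqrt_eq_rpow, ← Real.rpow_intCast, ← Real.rpow_mul hx]
  ring_nf

theorem Real.sqrt_mul_eq_mul_sqrt_div {p q : ℝ} (hp : 0 < p) :
    √(p * q) = p * √(q / p) := by
  rw [← Real.sqrt_sq hp.le, ← Real.sqrt_mul (sq_nonneg p), Real.sqrt_sq hp.le]
  congr 1
  field_simp

theorem kmQ_eq_sqrt_zpow_mul_chebCombo {p q : ℝ} (p₀ r₀ : ℝ) (hqp : 0 ≤ q / p) (j : ℤ) (x : ℝ) :
    kmQ p q p₀ r₀ j x = √(q / p) ^ j *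
      chebCombo (2 * (p₀ - p) / p₀) ((2 * p - p₀) / p₀) (r₀ / p₀ * √(p / q))
        (x / (2 * √(p * q))) j := by
  rw [kmQ, Real.rpow_intCast_div_two hqp, chebCombo]

theorem stmt_12_general (p q p₀ r₀ : ℝ) (hp : 0 < p) (hp1 : p < 1) (hq : q = 1 - p)
    (hp₀ : 0 < p₀) :
    (∀ x : ℝ, kmQ p q p₀ r₀ 0 x = 1) ∧
    (∀ x : ℝ, r₀ * kmQ p q p₀ r₀ 0 x + p₀ * kmQ p q p₀ r₀ 1 x = x * kmQ p q p₀ r₀ 0 x) ∧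
    (∀ j : ℤ, 1 ≤ j → ∀ x : ℝ,
      q * kmQ p q p₀ r₀ (j - 1) x + p * kmQ p q p₀ r₀ (j + 1) x = x * kmQ p q p₀ r₀ j x) := by
  have hq0 : 0 < q := by linarith
  set r := √(q / p)
  have hr : 0 < r := Real.sqrt_pos.mpr (by positivity)
  have hqr : q = p * r ^ 2 := by
    rw [Real.sq_sqrt (by positivity)]
    field_simp
  have hsqrt : √(p * q) = p * r := Real.sqrt_mul_eq_mul_sqrt_div hp
  have hx (x : ℝ) : x = 2 * (p * r) * (x / (2 * √(p * q))) := by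
    rw [hsqrt]
    field_simp
  have hQ₀ (x : ℝ) : kmQ p q p₀ r₀ 0 x = 1 := by
    rw [kmQ_eq_sqrt_zpow_mul_chebCombo _ _ (by positivity), chebCombo_zero]
    field_simp
    ring
  refine ⟨hQ₀, fun x => ?_, fun j _ x => ?_⟩
  · have hrinv : √(p / q) = r⁻¹ := by rw [← inv_div, Real.sqrt_inv]
    rw [hQ₀, kmQ_eq_sqrt_zpow_mul_chebCombo _ _ (by positivity), chebCombo_one, hrinv]
    conv_rhs => rw [hx x]
    field_simp
    ring
  · simp only [kmQ_eq_sqrt_zpow_mul_chebCombo _ _ (by positivity : 0 ≤ q / p)]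
    set y := x / (2 * √(p * q))
    set F := chebCombo (2 * (p₀ - p) / p₀) ((2 * p - p₀) / p₀) (r₀ / p₀ * √(p / q)) y
    have hF := zpow_mul_recurrence (F := F) hr.ne'
      (chebCombo_sub_one_add_chebCombo_add_one _ _ _ y) j
    have hxy : x = 2 * (p * r) * y := hx x
    linear_combination p * hF + (r ^ (j - 1) * F (j - 1)) * hqr - (r ^ j * F j) * hxy

theorem stmt_12 (p q p₀ r₀ : ℝ) (hp : 0 < p) (hp1 : p < 1) (hq : q = 1 - p)
    (hp₀ : 0 < p₀) (hr₀ : 0 ≤ r₀) :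
    (∀ x : ℝ, kmQ p q p₀ r₀ 0 x = 1) ∧
    (∀ x : ℝ, r₀ * kmQ p q p₀ r₀ 0 x + p₀ * kmQ p q p₀ r₀ 1 x = x * kmQ p q p₀ r₀ 0 x) ∧
    (∀ j : ℤ, 1 ≤ j → ∀ x : ℝ,
      q * kmQ p q p₀ r₀ (j - 1) x + p * kmQ p q p₀ r₀ (j + 1) x = x * kmQ p q p₀ r₀ j x) :=
  stmt_12_general p q p₀ r₀ hp hp1 hq hp₀
end

section
/- Let 0 < p < 1, q = 1 - p, p₀ > p, r₀ ≥ 0 with p₀ + r₀ ≤ 1 and p₀ > 2p + √(p/q)·r₀. Define x₁ = (r₀(2p - p₀) + p₀√(r₀² - 4q(p - p₀)))/(2(p - p₀)) and x₂ = (r₀(2p - p₀) - p₀√(r₀² - 4q(p - p₀)))/(2(p - p₀)). Then x₁ < -2√(pq) and x₂ > 2√(pq). -/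
/-!
Put `D = p₀ - p > 0` and `s = √(r₀² + 4qD)`. Both claims reduce to
`4D√(pq) + r₀(p₀ - 2p) < p₀ s` (the second one because `p₀ > 2p` and `r₀ ≥ 0`). Squaring, the
gap between the two sides is the perfect square `4D(√q(p₀ - 2p) - √p r₀)²`, and the hypothesis on
`p₀` says precisely that `√q(p₀ - 2p) > √p r₀`.
-/

open Real

lemma sq_mul_discr_sub_sq (a b p₀ r₀ : ℝ) :
    p₀ ^ 2 * (r₀ ^ 2 - 4 * b ^ 2 * (a ^ 2 - p₀))
      - (4 * (p₀ - a ^ 2) * (a * b) + r₀ * (p₀ - 2 * a ^ 2)) ^ 2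
      = 4 * (p₀ - a ^ 2) * (b * (p₀ - 2 * a ^ 2) - a * r₀) ^ 2 := by
  ring

lemma sqrt_mul_lt_of_lt_add_sqrt_div_mul {p q p₀ r₀ : ℝ} (hq : 0 < q)
    (h : p₀ > 2 * p + √(p / q) * r₀) : √p * r₀ < √q * (p₀ - 2 * p) := by
  have hsq : 0 < √q := sqrt_pos.2 hq
  calc √p * r₀ = √q * (√(p / q) * r₀) := by
        rw [sqrt_div' p hq.le]; field_simp
    _ < √q * (p₀ - 2 * p) := by gcongr; linarith

lemma add_lt_mul_sqrt_discr {p q p₀ r₀ : ℝ} (hp : 0 ≤ p) (hq : 0 ≤ q) (hr₀ : 0 ≤ r₀)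
    (h : √p * r₀ < √q * (p₀ - 2 * p)) :
    4 * (p₀ - p) * √(p * q) + r₀ * (p₀ - 2 * p) < p₀ * √(r₀ ^ 2 - 4 * q * (p - p₀)) := by
  have h2p : 0 < p₀ - 2 * p :=
    pos_of_mul_pos_right ((mul_nonneg (sqrt_nonneg p) hr₀).trans_lt h) (sqrt_nonneg q)
  have hD : 0 < p₀ - p := by linarith
  have hΔ : 0 ≤ r₀ ^ 2 - 4 * q * (p - p₀) := by nlinarith
  refine lt_of_pow_lt_pow_left₀ 2 (mul_nonneg (by linarith) (sqrt_nonneg _)) (sub_pos.1 ?_)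
  have hgap := sq_mul_discr_sub_sq (√p) (√q) p₀ r₀
  rw [sq_sqrt hp, sq_sqrt hq, ← sqrt_mul hp] at hgap
  rw [mul_pow, sq_sqrt hΔ, hgap]
  have : 0 < √q * (p₀ - 2 * p) - √p * r₀ := sub_pos.2 h
  positivity

theorem stmt_14_general (p q p₀ r₀ : ℝ) (hp : 0 < p) (hp1 : p < 1) (hq : q = 1 - p)
    (hr₀ : 0 ≤ r₀)
    (hcond : p₀ > 2 * p + Real.sqrt (p / q) * r₀)
    (x₁ x₂ : ℝ)
    (hx₁ : x₁ = (r₀ * (2 * p - p₀) + p₀ * Real.sqrt (r₀ ^ 2 - 4 * q * (p - p₀))) / (2 * (p - p₀)))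
    (hx₂ : x₂ = (r₀ * (2 * p - p₀) - p₀ * Real.sqrt (r₀ ^ 2 - 4 * q * (p - p₀))) / (2 * (p - p₀))) :
    x₁ < -(2 * Real.sqrt (p * q)) ∧ x₂ > 2 * Real.sqrt (p * q) := by
  have hq0 : 0 < q := by linarith
  have hsep := sqrt_mul_lt_of_lt_add_sqrt_div_mul hq0 hcond
  have h2p : 0 ≤ p₀ - 2 * p := by
    linarith [mul_nonneg (sqrt_nonneg (p / q)) hr₀]
  have hkey := add_lt_mul_sqrt_discr hp.le hq0.le hr₀ hsep
  have hneg : 2 * (p - p₀) < 0 := by linarith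
  constructor
  · rw [hx₁, div_lt_iff_of_neg hneg]
    linarith
  · rw [hx₂, gt_iff_lt, lt_div_iff_of_neg hneg]
    linarith [mul_nonneg hr₀ h2p]

theorem stmt_14 (p q p₀ r₀ : ℝ) (hp : 0 < p) (hp1 : p < 1) (hq : q = 1 - p)
    (hgt : p₀ > p) (hr₀ : 0 ≤ r₀) (hsum : p₀ + r₀ ≤ 1)
    (hcond : p₀ > 2 * p + Real.sqrt (p / q) * r₀)
    (x₁ x₂ : ℝ)
    (hx₁ : x₁ = (r₀ * (2 * p - p₀) + p₀ * Real.sqrt (r₀ ^ 2 - 4 * q * (p - p₀))) / (2 * (p - p₀)))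
    (hx₂ : x₂ = (r₀ * (2 * p - p₀) - p₀ * Real.sqrt (r₀ ^ 2 - 4 * q * (p - p₀))) / (2 * (p - p₀))) :
    x₁ < -(2 * Real.sqrt (p * q)) ∧ x₂ > 2 * Real.sqrt (p * q) :=
  stmt_14_general p q p₀ r₀ hp hp1 hq hr₀ hcond x₁ x₂ hx₁ hx₂
end

section
/- Let 0 < p < 1, q = 1 - p, 0 < p₀ < p, r₀ ≥ 0 with r₀² ≥ 4q(p - p₀). Then the inequality r₀ - √(r₀² - 4q(p - p₀)) < 2√(q/p)·(p - p₀) holds if and only if p₀ > 2p - √(p/q)·r₀. -/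
/-!
Write `q = s² p` with `s = √(q/p)` and `d = p - p₀`, so that `0 < d < p`. The discriminant
condition `r₀² ≥ 4 s² p d > (2 s d)²` forces `r₀ ≥ 2 s d`, so the inequality may be squared:
`r₀ - √(r₀² - 4 s² p d) < 2 s d` becomes `4 s d (s (p + d) - r₀) < 0`, i.e. `s (2p - p₀) < r₀`,
which is the claim after multiplying by `√(p/q) = s⁻¹`.
-/

lemma two_mul_mul_le_of_mul_le_sq {s d p r : ℝ} (hd : 0 ≤ d) (hdp : d ≤ p)
    (hr : 0 ≤ r) (hdisc : 4 * (s ^ 2 * p) * d ≤ r ^ 2) : 2 * s * d ≤ r := by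
  refine le_of_sq_le_sq ?_ hr
  calc (2 * s * d) ^ 2 = 4 * s ^ 2 * d * d := by ring
    _ ≤ 4 * s ^ 2 * d * p := by gcongr
    _ = 4 * (s ^ 2 * p) * d := by ring
    _ ≤ r ^ 2 := hdisc

lemma sub_sqrt_lt_two_mul_mul_iff {s d p r : ℝ} (hs : 0 < s) (hd : 0 < d) (hr : 2 * s * d ≤ r) :
    r - √(r ^ 2 - 4 * (s ^ 2 * p) * d) < 2 * s * d ↔ s * (p + d) < r := by
  rw [sub_lt_comm, Real.lt_sqrt (sub_nonneg.mpr hr)]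
  have hgap : (r - 2 * s * d) ^ 2 - (r ^ 2 - 4 * (s ^ 2 * p) * d)
      = (4 * s * d) * (s * (p + d) - r) := by ring
  rw [← sub_neg, hgap, ← smul_eq_mul, smul_neg_iff_of_pos_left (by positivity), sub_neg]

theorem stmt_19 (p q p₀ r₀ : ℝ) (hp : 0 < p) (hp1 : p < 1) (hq : q = 1 - p)
    (hp₀ : 0 < p₀) (hlt : p₀ < p) (hr₀ : 0 ≤ r₀)
    (hdisc : r₀ ^ 2 ≥ 4 * q * (p - p₀)) :
    r₀ - Real.sqrt (r₀ ^ 2 - 4 * q * (p - p₀)) < 2 * Real.sqrt (q / p) * (p - p₀) ↔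
      p₀ > 2 * p - Real.sqrt (p / q) * r₀ := by
  have hqp : 0 < q / p := div_pos (by linarith) hp
  set s := √(q / p)
  have hs : 0 < s := Real.sqrt_pos.mpr hqp
  have hq_eq : q = s ^ 2 * p := by rw [Real.sq_sqrt hqp.le, div_mul_cancel₀ q hp.ne']
  have hinv : √(p / q) = s⁻¹ := by rw [← Real.sqrt_inv, inv_div]
  have hd : 0 < p - p₀ := sub_pos.mpr hlt
  rw [hq_eq] at hdisc
  rw [hinv, hq_eq]
  have hr := two_mul_mul_le_of_mul_le_sq hd.le (by linarith) hr₀ hdisc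
  rw [sub_sqrt_lt_two_mul_mul_iff hs hd hr, gt_iff_lt, sub_lt_comm, lt_inv_mul_iff₀ hs]
  ring_nf
end
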